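/- For 0 < q < p ≤ 1, n ∈ ℕ and real x, y, the (p,q)-power (x+y)_{p,q}^n := ∏_{s=0}^{n-1}(p^s x + q^s y) admits the binomial expansion (x+y)_{p,q}^n = Σ_{k=0}^{n} [n choose k]_{p,q} · q^{k(k-1)/2} · p^{(n-k)(n-k-1)/2} · x^{n-k} y^{k}. -/

import Mathlib

noncomputable section

/-- The (p,q)-integer [n]_{p,q} = (p^n - q^n)/(p-q). -/
def pqInt (p q : ℝ) (n : ℕ) : ℝ := (p ^ n - q ^ n) / (p - q)

/-- The (p,q)-factorial [n]_{p,q}! = ∏_{j=1}^n [j]_{p,q}. -/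
def pqFact (p q : ℝ) (n : ℕ) : ℝ := ∏ j ∈ Finset.range n, pqInt p q (j + 1)

/-- The (p,q)-binomial coefficient. -/
def pqBinom (p q : ℝ) (n k : ℕ) : ℝ := pqFact p q n / (pqFact p q k * pqFact p q (n - k))

/-- The (p,q)-power (x+y)_{p,q}^n = ∏_{s=0}^{n-1} (p^s x + q^s y). -/
def pqPow (p q x y : ℝ) (n : ℕ) : ℝ := ∏ s ∈ Finset.range n, (p ^ s * x + q ^ s * y)

/-- The (p,q)-Bernstein basis b_{n,k}^{(p,q)}(x). -/
def pqBernstein (p q : ℝ) (n k : ℕ) (x : ℝ) : ℝ :=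
  pqBinom p q n k * x ^ k * ∏ s ∈ Finset.range (n - k), (p ^ s - q ^ s * x)

/-- The (p,q)-integral of f over [0,1] (case p > q). -/
def pqIntegral01 (p q : ℝ) (f : ℝ → ℝ) : ℝ :=
  (p - q) * ∑' j : ℕ, (q ^ j / p ^ (j + 1)) * f (q ^ j / p ^ (j + 1))

/-- The (p,q)-Bernstein-Schurer-Kantorovich operator K_{n,ℓ}^{(p,q)}(f;x). -/
def pqBSK (p q : ℝ) (n l : ℕ) (f : ℝ → ℝ) (x : ℝ) : ℝ :=
  ∑ k ∈ Finset.range (n + l + 1), pqBernstein p q (n + l) k x *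
    pqIntegral01 p q (fun t => f (pqInt p q k / pqInt p q (n + 1) +
      (pqInt p q (k + 1) - pqInt p q k) / pqInt p q (n + 1) * t))

/-- (px + 1 - x)_{p,q}^m = ∏_{s=0}^{m-1} (p^{s+1} x + q^s (1-x)). -/
def pqShiftPow (p q x : ℝ) (m : ℕ) : ℝ :=
  ∏ s ∈ Finset.range m, (p ^ (s + 1) * x + q ^ s * (1 - x))

/-- The modulus of continuity of f on [0,a]. -/
def modulus (f : ℝ → ℝ) (a δ : ℝ) : ℝ :=
  sSup {d | ∃ x ∈ Set.Icc (0:ℝ) a, ∃ y ∈ Set.Icc (0:ℝ) a, |x - y| ≤ δ ∧ d = |f x - f y|}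

/-!
Induction on `n` as for the ordinary binomial theorem: multiplying the expansion of
`(x+y)_{p,q}^n` by `p^n x + q^n y` and collecting terms reduces the step to the (p,q)-Pascal rule
`[n+1 choose k] = p^k [n choose k] + q^(n+1-k) [n choose k-1]`, itself a consequence of
`[a+b] = p^a [b] + q^b [a]`. The exponents `k(k-1)/2` are `choose k 2`, which grow by `k`
from `k` to `k+1`, exactly absorbing the factors `p^n` and `q^n`.
-/

lemma pqInt_add (p q : ℝ) (a b : ℕ) :
    pqInt p q (a + b) = p ^ a * pqInt p q b + q ^ b * pqInt p q a := by
  simp only [pqInt, pow_add]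
  ring

lemma pqInt_pos {p q : ℝ} (hq : 0 ≤ q) (hqp : q < p) {n : ℕ} (hn : n ≠ 0) :
    0 < pqInt p q n :=
  div_pos (sub_pos.2 (pow_lt_pow_left₀ hqp hq hn)) (sub_pos.2 hqp)

lemma pqFact_succ (p q : ℝ) (n : ℕ) : pqFact p q (n + 1) = pqFact p q n * pqInt p q (n + 1) :=
  Finset.prod_range_succ _ _

lemma pqFact_pos {p q : ℝ} (hq : 0 ≤ q) (hqp : q < p) (n : ℕ) : 0 < pqFact p q n :=
  Finset.prod_pos fun j _ => pqInt_pos hq hqp j.succ_ne_zero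

lemma pqBinom_zero_right {p q : ℝ} (hq : 0 ≤ q) (hqp : q < p) (n : ℕ) :
    pqBinom p q n 0 = 1 := by
  simpa [pqBinom, pqFact] using div_self (pqFact_pos hq hqp n).ne'

lemma pqBinom_self {p q : ℝ} (hq : 0 ≤ q) (hqp : q < p) (n : ℕ) : pqBinom p q n n = 1 := by
  simpa [pqBinom, pqFact] using div_self (pqFact_pos hq hqp n).ne'

lemma pqBinom_pascal {p q : ℝ} (hq : 0 ≤ q) (hqp : q < p) (a b : ℕ) :
    pqBinom p q (a + b + 2) (a + 1) =
      p ^ (a + 1) * pqBinom p q (a + b + 1) (a + 1) + q ^ (b + 1) * pqBinom p q (a + b + 1) a := by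
  have hF := fun n => (pqFact_pos hq hqp n).ne'
  have hI := fun n => (pqInt_pos hq hqp (Nat.succ_ne_zero n)).ne'
  simp only [pqBinom, show a + b + 2 - (a + 1) = b + 1 by omega,
    show a + b + 1 - (a + 1) = b by omega, show a + b + 1 - a = b + 1 by omega]
  rw [show a + b + 2 = a + b + 1 + 1 from rfl, pqFact_succ p q (a + b + 1), pqFact_succ p q a,
    pqFact_succ p q b, show a + b + 1 + 1 = (a + 1) + (b + 1) by ring, pqInt_add]
  field_simp [hF, hI]

lemma choose_two_succ (n : ℕ) : (n + 1).choose 2 = n.choose 2 + n := by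
  rw [Nat.choose_succ_succ', Nat.choose_one_right, add_comm]

def pqBinomTerm (p q x y : ℝ) (n k : ℕ) : ℝ :=
  pqBinom p q n k * q ^ k.choose 2 * p ^ (n - k).choose 2 * x ^ (n - k) * y ^ k

lemma pqBinomTerm_succ_zero {p q : ℝ} (hq : 0 ≤ q) (hqp : q < p) (x y : ℝ) (n : ℕ) :
    pqBinomTerm p q x y (n + 1) 0 = pqBinomTerm p q x y n 0 * (p ^ n * x) := by
  simp only [pqBinomTerm, pqBinom_zero_right hq hqp, Nat.sub_zero, choose_two_succ]
  ring

lemma pqBinomTerm_succ_self {p q : ℝ} (hq : 0 ≤ q) (hqp : q < p) (x y : ℝ) (n : ℕ) :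
    pqBinomTerm p q x y (n + 1) (n + 1) = pqBinomTerm p q x y n n * (q ^ n * y) := by
  simp only [pqBinomTerm, pqBinom_self hq hqp, Nat.sub_self, choose_two_succ]
  ring

lemma pqBinomTerm_succ_succ {p q : ℝ} (hq : 0 ≤ q) (hqp : q < p) (x y : ℝ) {n k : ℕ}
    (hk : k < n) :
    pqBinomTerm p q x y (n + 1) (k + 1) =
      pqBinomTerm p q x y n (k + 1) * (p ^ n * x) + pqBinomTerm p q x y n k * (q ^ n * y) := by
  obtain ⟨m, rfl⟩ : ∃ m, n = k + 1 + m := ⟨n - (k + 1), by omega⟩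
  rw [show k + 1 + m + 1 = k + m + 2 by ring, show k + 1 + m = k + m + 1 by ring]
  simp only [pqBinomTerm, pqBinom_pascal hq hqp, show k + m + 2 - (k + 1) = m + 1 by omega,
    show k + m + 1 - (k + 1) = m by omega, show k + m + 1 - k = m + 1 by omega, choose_two_succ]
  ring

theorem pqPow_eq_sum_pqBinomTerm {p q : ℝ} (hq : 0 ≤ q) (hqp : q < p) (x y : ℝ) (n : ℕ) :
    pqPow p q x y n = ∑ k ∈ Finset.range (n + 1), pqBinomTerm p q x y n k := by
  induction n with
  | zero => simp [pqPow, pqBinomTerm, pqBinom_self hq hqp]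
  | succ n ih =>
    calc pqPow p q x y (n + 1) = pqPow p q x y n * (p ^ n * x + q ^ n * y) :=
          Finset.prod_range_succ _ _
      _ = (∑ k ∈ Finset.range (n + 1), pqBinomTerm p q x y n k) * (p ^ n * x) +
            (∑ k ∈ Finset.range (n + 1), pqBinomTerm p q x y n k) * (q ^ n * y) := by
          rw [ih, mul_add]
      _ = pqBinomTerm p q x y n 0 * (p ^ n * x) +
            ∑ k ∈ Finset.range n, (pqBinomTerm p q x y n (k + 1) * (p ^ n * x) +
              pqBinomTerm p q x y n k * (q ^ n * y)) +
            pqBinomTerm p q x y n n * (q ^ n * y) := by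
          rw [Finset.sum_mul, Finset.sum_mul, Finset.sum_range_succ', Finset.sum_range_succ _ n,
            Finset.sum_add_distrib]
          ring
      _ = ∑ k ∈ Finset.range (n + 2), pqBinomTerm p q x y (n + 1) k := by
          rw [Finset.sum_range_succ', Finset.sum_range_succ _ n, pqBinomTerm_succ_zero hq hqp,
            pqBinomTerm_succ_self hq hqp, Finset.sum_congr rfl fun k hk =>
              pqBinomTerm_succ_succ hq hqp x y (Finset.mem_range.1 hk)]
          ring

theorem stmt4_general (p q : ℝ) (hq : 0 < q) (hqp : q < p) (n : ℕ) (x y : ℝ) :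
    pqPow p q x y n =
      ∑ k ∈ Finset.range (n + 1), pqBinom p q n k *
        q ^ (k * (k - 1) / 2) * p ^ ((n - k) * (n - k - 1) / 2) * x ^ (n - k) * y ^ k := by
  simp only [pqPow_eq_sum_pqBinomTerm hq.le hqp, pqBinomTerm, Nat.choose_two_right]

theorem stmt4 (p q : ℝ) (hq : 0 < q) (hqp : q < p) (hp : p ≤ 1) (n : ℕ) (x y : ℝ) :
    pqPow p q x y n =
      ∑ k ∈ Finset.range (n + 1), pqBinom p q n k *
        q ^ (k * (k - 1) / 2) * p ^ ((n - k) * (n - k - 1) / 2) * x ^ (n - k) * y ^ k :=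
  stmt4_general p q hq hqp n x y
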